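/- arXiv:1503.00572 — 8 statements merged into one kernel-verified Lean document; each statement's English description precedes it below -/
import Mathlib

section
/- If a probability distribution p on a finite set V is a mixture p = Σ_{i=1}^k λ_i p^i of k probability distributions (λ_i > 0, Σλ_i = 1), and x is a strict strong mode of p with respect to a graph G on V (i.e., p_x > Σ_{y∼x} p_y), then x is a mode of at least one of the distributions p^i (i.e., p^i_x ≥ p^i_y for all y ∼ x). -/
/-- If a probability distribution `p` on a finite set `V` is a mixture of `k`
probability distributions and `x` is a strict strong mode of `p` w.r.t. a graph `G`,
then `x` is a mode of one of the component distributions. -/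
theorem strict_strong_mode_of_mixture {V : Type*} [Fintype V]
    (G : SimpleGraph V) [DecidableRel G.Adj]
    (k : ℕ) (l : Fin k → ℝ) (P : Fin k → V → ℝ)
    (hlpos : ∀ i, 0 < l i) (hlsum : ∑ i, l i = 1)
    (hPnn : ∀ i v, 0 ≤ P i v) (hPsum : ∀ i, ∑ v, P i v = 1)
    (p : V → ℝ) (hp : ∀ v, p v = ∑ i, l i * P i v)
    (x : V) (hx : ∑ y ∈ G.neighborFinset x, p y < p x) :
    ∃ i, ∀ y, G.Adj x y → P i y ≤ P i x := by
  by_contra h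
  push_neg at h
  choose f hf1 hf2 using h
  have hk : (Finset.univ : Finset (Fin k)).Nonempty := by
    by_contra hk
    rw [Finset.not_nonempty_iff_eq_empty] at hk
    rw [hk, Finset.sum_empty] at hlsum
    norm_num at hlsum
  have key : p x < ∑ i, l i * P i (f i) := by
    rw [hp]
    exact Finset.sum_lt_sum_of_nonempty hk fun i _ =>
      mul_lt_mul_of_pos_left (hf2 i) (hlpos i)
  have step : ∀ i, P i (f i) ≤ ∑ y ∈ G.neighborFinset x, P i y := by
    intro i
    exact Finset.single_le_sum (fun y _ => hPnn i y)
      (by rw [SimpleGraph.mem_neighborFinset]; exact hf1 i)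
  have : ∑ i, l i * P i (f i) ≤ ∑ y ∈ G.neighborFinset x, p y := by
    calc ∑ i, l i * P i (f i)
        ≤ ∑ i, l i * ∑ y ∈ G.neighborFinset x, P i y :=
          Finset.sum_le_sum fun i _ =>
            mul_le_mul_of_nonneg_left (step i) (hlpos i).le
      _ = ∑ y ∈ G.neighborFinset x, ∑ i, l i * P i y := by
          rw [Finset.sum_comm]
          simp [Finset.mul_sum]
      _ = ∑ y ∈ G.neighborFinset x, p y := by simp [hp]
  linarith
end

section
/- A mixture of k probability distributions each having a unique mode with respect to a graph G has at most k strict strong modes. -/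
/-- A mixture of `k` probability distributions, each having a unique mode with respect
to a graph `G`, has at most `k` strict strong modes. -/
theorem mixture_unimodal_at_most_k_strict_strong_modes {V : Type*} [Fintype V]
    (G : SimpleGraph V) [DecidableRel G.Adj]
    (k : ℕ) (l : Fin k → ℝ) (P : Fin k → V → ℝ)
    (hlnn : ∀ i, 0 ≤ l i) (hlsum : ∑ i, l i = 1)
    (hPnn : ∀ i v, 0 ≤ P i v) (hPsum : ∀ i, ∑ v, P i v = 1)
    (hUni : ∀ i, ∃! m : V, ∀ y, G.Adj m y → P i y ≤ P i m)
    (p : V → ℝ) (hp : ∀ v, p v = ∑ i, l i * P i v) :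
    Set.ncard {x : V | ∑ y ∈ G.neighborFinset x, p y < p x} ≤ k := by
  classical
  rcases Nat.eq_zero_or_pos k with hk | hk
  · subst hk
    simp at hlsum
  haveI : Nonempty (Fin k) := ⟨⟨0, hk⟩⟩
  have key : ∀ x : V, (∑ y ∈ G.neighborFinset x, p y < p x) →
      ∃ i : Fin k, ∀ y, G.Adj x y → P i y ≤ P i x := by
    intro x hx
    have h1 : ∑ i, l i * ∑ y ∈ G.neighborFinset x, P i y < ∑ i, l i * P i x := by
      calc ∑ i, l i * ∑ y ∈ G.neighborFinset x, P i y
          = ∑ y ∈ G.neighborFinset x, p y := by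
            simp_rw [hp, Finset.mul_sum]
            rw [Finset.sum_comm]
        _ < p x := hx
        _ = ∑ i, l i * P i x := hp x
    obtain ⟨i, -, hi⟩ := Finset.exists_lt_of_sum_lt h1
    have hli : 0 < l i := by
      rcases (hlnn i).lt_or_eq with h | h
      · exact h
      · exfalso; rw [← h] at hi; simp at hi
    have hsum : ∑ y ∈ G.neighborFinset x, P i y < P i x :=
      (mul_lt_mul_iff_right₀ hli).mp hi
    refine ⟨i, fun y hy => le_of_lt (lt_of_le_of_lt ?_ hsum)⟩
    exact Finset.single_le_sum (fun z _ => hPnn i z)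
      ((SimpleGraph.mem_neighborFinset G x y).mpr hy)
  set S := Finset.univ.filter (fun x : V => ∑ y ∈ G.neighborFinset x, p y < p x) with hS
  have hset : {x : V | ∑ y ∈ G.neighborFinset x, p y < p x} = ↑S := by
    ext x; simp [hS]
  rw [hset, Set.ncard_coe_finset]
  have hcard : S.card ≤ (Finset.univ : Finset (Fin k)).card := by
    apply Finset.card_le_card_of_injOn
      (fun x => if h : ∑ y ∈ G.neighborFinset x, p y < p x then (key x h).choose
                else Classical.arbitrary (Fin k))
    · intro x _; exact Finset.mem_univ _
    · intro x hx x' hx' hxx'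
      simp only [hS, Finset.mem_coe, Finset.mem_filter] at hx hx'
      simp only [dif_pos hx.2, dif_pos hx'.2] at hxx'
      have h1 := (key x hx.2).choose_spec
      have h2 := (key x' hx'.2).choose_spec
      rw [hxx'] at h1
      obtain ⟨m, -, hm⟩ := hUni ((key x' hx'.2).choose)
      rw [hm x h1, hm x' h2]
  simpa using hcard
end

section
/- Let C ⊆ V be independent in G. For each nonempty W ⊆ V∖C, let N_C(W) = {y ∈ C : y is adjacent to some element of W} and let e_C^W be the uniform distribution on N_C(W) ∪ W. Then M(G,C) equals the convex hull of { e_C^W : ∅ ≠ W ⊆ V∖C } ∪ { δ_x : x ∈ C }, where δ_x is the point mass at x. -/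
/-- The polytope of `C`-modes of a graph `G`, inside the probability simplex. -/
def modePolytope {V : Type*} [Fintype V] (G : SimpleGraph V) (C : Set V) :
    Set (V → ℝ) :=
  {p | (∀ v, 0 ≤ p v) ∧ (∑ v, p v = 1) ∧ ∀ x ∈ C, ∀ y, G.Adj x y → p y ≤ p x}

/-- The uniform probability distribution on a finite subset. -/
noncomputable def uniformOn {V : Type*} [DecidableEq V] (s : Finset V) : V → ℝ :=
  fun v => if v ∈ s then (s.card : ℝ)⁻¹ else 0

/-- `N_C(W)`: the elements of `C` adjacent to some element of `W`. -/
def modeNbrs {V : Type*} [DecidableEq V] (G : SimpleGraph V) [DecidableRel G.Adj]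
    (C W : Finset V) : Finset V :=
  C.filter fun y => ∃ w ∈ W, G.Adj y w

/-!
Both sets are convex, and every generator lies in `M(G,C)` because `C` is independent; the
content is the inclusion `M(G,C) ⊆ hull`. Drop the normalisation `∑ p = 1`: the nonnegative `p`
with `p y ≤ p x` for `x ∈ C`, `y ∼ x` form a cone, and it suffices to show that this cone is
generated by the `e_C^W` and `δ_x`, since a conic combination of probability vectors that is
itself a probability vector is a convex combination. Peeling off `t • 1_S`, where `S` is the
support of `p` and `t` the minimum of `p` on `S`, stays in the cone and shrinks the support. The
support `S` contains the `C`-neighbours of `W = S ∖ C`, so `1_S` is `1_{N_C(W) ∪ W}` plus point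
masses at the remaining points of `S`, all of which lie in `C`.
-/

open Finset

theorem PointedCone.mem_convexHull_of_mem_hull {𝕜 E : Type*} [Field 𝕜] [LinearOrder 𝕜]
    [IsStrictOrderedRing 𝕜] [AddCommGroup E] [Module 𝕜 E] {s : Set E} (f : E →ₗ[𝕜] 𝕜)
    (hs : ∀ v ∈ s, f v = 1) {p : E} (hp : p ∈ PointedCone.hull 𝕜 s) (hfp : f p = 1) :
    p ∈ convexHull 𝕜 s := by
  obtain ⟨n, c, g, rfl⟩ := Submodule.mem_span_set'.1 hp
  simp only [← Nonneg.coe_smul, map_sum, map_smul, hs _ (g _).2, smul_eq_mul, mul_one] at hfp ⊢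
  exact (convex_convexHull 𝕜 s).sum_mem (fun i _ => (c i).2) hfp
    (fun i _ => subset_convexHull 𝕜 s (g i).2)

section ModeCone

variable {V : Type*} {G : SimpleGraph V} {C : Finset V}

variable (G C) in
def modeCone : Set (V → ℝ) :=
  {p | (∀ v, 0 ≤ p v) ∧ ∀ x ∈ C, ∀ y, G.Adj x y → p y ≤ p x}

lemma mem_modePolytope_iff [Fintype V] {p : V → ℝ} :
    p ∈ modePolytope G C ↔ p ∈ modeCone G C ∧ ∑ v, p v = 1 := by
  simp only [modePolytope, modeCone, Set.mem_ofPred_eq, mem_coe]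
  tauto

lemma convex_modePolytope [Fintype V] : Convex ℝ (modePolytope G C) := by
  rintro p ⟨hp0, hp1, hpC⟩ q ⟨hq0, hq1, hqC⟩ a b ha hb hab
  refine ⟨fun v => ?_, ?_, fun x hx y hxy => ?_⟩
  · have := hp0 v; have := hq0 v
    simp only [Pi.add_apply, Pi.smul_apply, smul_eq_mul]
    positivity
  · simp [sum_add_distrib, ← mul_sum, hp1, hq1, hab]
  · simp only [Pi.add_apply, Pi.smul_apply, smul_eq_mul]
    gcongr
    exacts [hpC x hx y hxy, hqC x hx y hxy]

lemma sub_inf'_smul_indicator_mem_modeCone {p : V → ℝ} (hp : p ∈ modeCone G C) {S : Finset V}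
    (hS : ∀ v, v ∈ S ↔ p v ≠ 0) (hne : S.Nonempty) :
    p - S.inf' hne p • (S : Set V).indicator 1 ∈ modeCone G C := by
  have hpS (v : V) (hv : v ∉ S) : p v = 0 := by simpa using (hS v).not.1 hv
  have hnonneg (v : V) : 0 ≤ (p - S.inf' hne p • (S : Set V).indicator 1 : V → ℝ) v := by
    by_cases hv : v ∈ S
    · simp only [Pi.sub_apply, Pi.smul_apply, Set.indicator_of_mem (mem_coe.2 hv), Pi.one_apply,
        smul_eq_mul, mul_one, sub_nonneg]
      exact inf'_le p hv
    · simp [hv, hpS v hv]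
  refine ⟨hnonneg, fun x hx y hxy => ?_⟩
  by_cases hy : y ∈ S
  · have hxS : x ∈ S := (hS x).2 <|
      ((hp.1 y).lt_of_ne ((hS y).1 hy).symm |>.trans_le (hp.2 x hx y hxy)).ne'
    simpa [hy, hxS] using hp.2 x hx y hxy
  · simpa [hy, hpS y hy] using hnonneg x

variable [DecidableEq V]

lemma uniformOn_mem_modeCone {s : Finset V} (hs : ∀ x ∈ C, ∀ y ∈ s, G.Adj x y → x ∈ s) :
    uniformOn s ∈ modeCone G C := by
  refine ⟨fun v => by unfold uniformOn; positivity, fun x hx y hxy => ?_⟩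
  by_cases hy : y ∈ s
  · simp [uniformOn, hy, hs x hx y hy hxy]
  · unfold uniformOn; rw [if_neg hy]; positivity

lemma indicator_eq_card_smul_uniformOn (s : Finset V) :
    (s : Set V).indicator 1 = (#s : ℝ) • uniformOn s := by
  ext v
  by_cases hv : v ∈ s
  · simp [uniformOn, hv, card_ne_zero_of_mem hv]
  · simp [uniformOn, hv]

lemma sum_uniformOn [Fintype V] {s : Finset V} (hs : s.Nonempty) : ∑ v, uniformOn s v = 1 := by
  simp [uniformOn, sum_ite_mem, hs.card_ne_zero]

lemma support_sub_inf'_smul_indicator_ssubset [Fintype V] {p : V → ℝ} {S : Finset V}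
    (hS : ∀ v, v ∈ S ↔ p v ≠ 0) (hne : S.Nonempty) :
    ({v | (p - S.inf' hne p • (S : Set V).indicator 1 : V → ℝ) v ≠ 0} : Finset V) ⊂ S := by
  obtain ⟨v₀, hv₀, hmin⟩ := S.exists_mem_eq_inf' hne p
  refine (ssubset_iff_of_subset fun v hv => ?_).2 ⟨v₀, hv₀, ?_⟩
  · by_contra hvS
    simp [Set.indicator_of_notMem (mem_coe.not.2 hvS), (hS v).not_left.1 hvS] at hv
  · simp [hv₀, hmin]

variable [DecidableRel G.Adj]

variable (G C) in
def modeGenerators : Set (V → ℝ) :=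
  {q | ∃ W : Finset V, W.Nonempty ∧ (∀ w ∈ W, w ∉ C) ∧ q = uniformOn (modeNbrs G C W ∪ W)} ∪
    {q | ∃ x ∈ C, q = uniformOn {x}}

lemma modeNbrs_subset_of_mem_modeCone {p : V → ℝ} (hp : p ∈ modeCone G C) {S : Finset V}
    (hS : ∀ v, v ∈ S ↔ p v ≠ 0) : modeNbrs G C (S \ C) ⊆ S := by
  intro y hy
  obtain ⟨hyC, w, hw, hyw⟩ := mem_filter.1 hy
  have hw0 : 0 < p w := (hp.1 w).lt_of_ne ((hS w).1 (mem_sdiff.1 hw).1).symm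
  exact (hS y).2 (hw0.trans_le (hp.2 y hyC w hyw)).ne'

lemma indicator_mem_hull_modeGenerators {S : Finset V} (hS : modeNbrs G C (S \ C) ⊆ S) :
    (S : Set V).indicator 1 ∈ PointedCone.hull ℝ (modeGenerators G C) := by
  set A := modeNbrs G C (S \ C) ∪ S \ C
  have hA : (A : Set V).indicator 1 ∈ PointedCone.hull ℝ (modeGenerators G C) := by
    obtain hW | hW := (S \ C).eq_empty_or_nonempty
    · have : A = ∅ := by simp [A, hW, modeNbrs]
      rw [this, coe_empty, Set.indicator_empty]
      exact zero_mem _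
    rw [indicator_eq_card_smul_uniformOn]
    exact PointedCone.smul_mem _ (Nat.cast_nonneg _) (PointedCone.subset_hull
      (Or.inl ⟨_, hW, fun w hw => (mem_sdiff.1 hw).2, rfl⟩))
  have hE : S \ A ⊆ C := by
    intro x hx
    by_contra hxC
    exact (mem_sdiff.1 hx).2 (mem_union_right _ (mem_sdiff.2 ⟨(mem_sdiff.1 hx).1, hxC⟩))
  have hdecomp : (S : Set V).indicator 1 =
      (A : Set V).indicator 1 + ∑ x ∈ S \ A, ({x} : Set V).indicator (1 : V → ℝ) := by
    ext v
    simp only [Pi.add_apply, Finset.sum_apply, Set.indicator_apply, mem_coe,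
      Pi.one_apply]
    by_cases hvA : v ∈ A
    · simp [hvA, (subset_iff.1 (union_subset hS sdiff_subset)) hvA]
    · simp [hvA]
  rw [hdecomp]
  refine add_mem hA (sum_mem fun x hx => ?_)
  have : ({x} : Set V).indicator (1 : V → ℝ) = uniformOn {x} := by
    simpa using indicator_eq_card_smul_uniformOn {x}
  rw [this]
  exact PointedCone.subset_hull (Or.inr ⟨x, hE hx, rfl⟩)

variable [Fintype V]

lemma modeGenerators_subset_modePolytope (hInd : ∀ x ∈ C, ∀ y ∈ C, ¬ G.Adj x y) :
    modeGenerators G C ⊆ modePolytope G C := by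
  rintro q (⟨W, ⟨w, hw⟩, -, rfl⟩ | ⟨x, hx, rfl⟩) <;> rw [mem_modePolytope_iff]
  · refine ⟨uniformOn_mem_modeCone fun c hc y hy hcy => ?_,
      sum_uniformOn ⟨w, mem_union_right _ hw⟩⟩
    have hyW : y ∈ W := by
      rcases mem_union.1 hy with hy | hy
      · exact absurd hcy (hInd c hc y (mem_filter.1 hy).1)
      · exact hy
    exact mem_union_left _ (mem_filter.2 ⟨hc, y, hyW, hcy⟩)
  · refine ⟨uniformOn_mem_modeCone fun c hc y hy hcy => ?_,
      sum_uniformOn ⟨x, mem_singleton_self x⟩⟩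
    rw [mem_singleton.1 hy] at hcy
    exact absurd hcy (hInd c hc x hx)

theorem modeCone_subset_hull_modeGenerators :
    modeCone G C ⊆ PointedCone.hull ℝ (modeGenerators G C) := by
  intro p hp
  induction hn : #({v | p v ≠ 0} : Finset V) using Nat.strong_induction_on generalizing p with
  | _ n ih =>
  set S : Finset V := {v | p v ≠ 0}
  have hS : ∀ v, v ∈ S ↔ p v ≠ 0 := by simp [S]
  obtain hS0 | hne := S.eq_empty_or_nonempty
  · obtain rfl : p = 0 := funext fun v => by simpa [hS0] using hS v
    exact zero_mem _
  have ht : 0 ≤ S.inf' hne p := le_inf' hne p fun v _ => hp.1 v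
  rw [← sub_add_cancel p (S.inf' hne p • (S : Set V).indicator 1)]
  refine add_mem (ih _ ?_ (sub_inf'_smul_indicator_mem_modeCone hp hS hne) rfl)
    (PointedCone.smul_mem _ ht (indicator_mem_hull_modeGenerators
      (modeNbrs_subset_of_mem_modeCone hp hS)))
  exact hn ▸ card_lt_card (support_sub_inf'_smul_indicator_ssubset hS hne)

end ModeCone

/-- For an independent set `C`, the mode polytope `M(G,C)` is the convex hull of the
uniform distributions `e_C^W` on `N_C(W) ∪ W` for nonempty `W ⊆ V∖C`, together with
the point masses `δ_x` for `x ∈ C`. -/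
theorem modePolytope_eq_convexHull {V : Type*} [Fintype V] [DecidableEq V]
    (G : SimpleGraph V) [DecidableRel G.Adj] (C : Finset V)
    (hInd : ∀ x ∈ C, ∀ y ∈ C, ¬ G.Adj x y) :
    modePolytope G ↑C =
      convexHull ℝ
        ({q | ∃ W : Finset V, W.Nonempty ∧ (∀ w ∈ W, w ∉ C) ∧
            q = uniformOn (modeNbrs G C W ∪ W)} ∪
         {q | ∃ x ∈ C, q = uniformOn {x}}) := by
  change modePolytope G C = convexHull ℝ (modeGenerators G C)
  have hgen := modeGenerators_subset_modePolytope hInd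
  refine (convexHull_min hgen convex_modePolytope).antisymm' fun p hp => ?_
  obtain ⟨hpK, hp1⟩ := mem_modePolytope_iff.1 hp
  let total : (V → ℝ) →ₗ[ℝ] ℝ := ∑ v, LinearMap.proj v
  refine PointedCone.mem_convexHull_of_mem_hull total (fun q hq => ?_)
    (modeCone_subset_hull_modeGenerators hpK) (by simpa [total] using hp1)
  simpa [total] using (mem_modePolytope_iff.1 (hgen hq)).2
end

section
/- If C ⊆ V is independent in G, then the mode polytope M(G,C) is full-dimensional in the probability simplex, i.e., dim M(G,C) = |V| - 1. -/
open Module Submodule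

section CoordSum

variable (K V : Type*) [Field K] [Fintype V]

noncomputable def coordSum : Dual K (V → K) where
  toFun f := ∑ v, f v
  map_add' _ _ := Finset.sum_add_distrib
  map_smul' _ _ := (Finset.mul_sum _ _ _).symm

variable {K V}

@[simp]
lemma coordSum_apply (f : V → K) : coordSum K V f = ∑ v, f v := rfl

lemma finrank_ker_coordSum [Nonempty V] :
    finrank K (LinearMap.ker (coordSum K V)) = Fintype.card V - 1 := by
  classical
  have hne : coordSum K V ≠ 0 := fun h => by
    simpa using LinearMap.congr_fun h (Pi.single (Classical.arbitrary V) 1)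
  have := Dual.finrank_ker_add_one_of_ne_zero hne
  rw [finrank_fintype_fun_eq_card] at this
  omega

lemma ker_coordSum_le_span_single_sub_single [DecidableEq V] (v₀ : V) :
    LinearMap.ker (coordSum K V) ≤
      span K (Set.range fun v => Pi.single v (1 : K) - Pi.single v₀ 1) := by
  intro f hf
  have hf_eq : ∑ v, f v • (Pi.single v (1 : K) - Pi.single v₀ 1) = f := by
    simp_rw [smul_sub, Finset.sum_sub_distrib, ← Finset.sum_smul]
    rw [show ∑ v, f v = 0 from hf, zero_smul, sub_zero]
    exact (pi_eq_sum_univ' f).symm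
  rw [← hf_eq]
  exact sum_mem fun v _ => smul_mem _ _ (subset_span ⟨v, rfl⟩)

end CoordSum

lemma vectorSpan_le_ker_of_subset_preimage {K E F : Type*} [Ring K] [AddCommGroup E]
    [Module K E] [AddCommGroup F] [Module K F] {s : Set E} (φ : E →ₗ[K] F) (c : F)
    (hs : s ⊆ φ ⁻¹' {c}) : vectorSpan K s ≤ LinearMap.ker φ := by
  rw [vectorSpan_def, span_le]
  rintro _ ⟨a, ha, b, hb, rfl⟩
  change φ (a - b) = 0
  rw [map_sub, hs ha, hs hb, sub_self]

section ModePolytope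

variable {V : Type*} {C : Set V}

open Classical in
noncomputable def modeWeight (C : Set V) (v : V) : ℝ := if v ∈ C then 3 else 1

lemma modeWeight_pos (v : V) : 0 < modeWeight C v := by
  unfold modeWeight
  split_ifs <;> norm_num

variable [Fintype V] {G : SimpleGraph V}

lemma modePolytope_subset_coordSum_preimage :
    modePolytope G C ⊆ coordSum ℝ V ⁻¹' {1} :=
  fun _ hp => hp.2.1

lemma inv_sum_smul_mem_modePolytope {f : V → ℝ} (hf_nonneg : ∀ v, 0 ≤ f v)
    (hf_pos : 0 < ∑ v, f v) (hf_mode : ∀ x ∈ C, ∀ y, G.Adj x y → f y ≤ f x) :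
    (∑ v, f v)⁻¹ • f ∈ modePolytope G C := by
  have hinv := inv_pos.2 hf_pos
  refine ⟨fun v => mul_nonneg hinv.le (hf_nonneg v), ?_, fun x hx y hxy => ?_⟩
  · simp [← Finset.mul_sum, hf_pos.ne']
  · exact mul_le_mul_of_nonneg_left (hf_mode x hx y hxy) hinv.le

lemma sum_modeWeight_pos [Nonempty V] : 0 < ∑ v, modeWeight C v :=
  Finset.sum_pos (fun v _ => modeWeight_pos v) Finset.univ_nonempty

lemma modeWeight_add_single_sub_single_mem [DecidableEq V]
    (hInd : ∀ x ∈ C, ∀ y ∈ C, ¬ G.Adj x y) (u v : V) :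
    (∑ t, modeWeight C t)⁻¹ • (modeWeight C + Pi.single u 1 - Pi.single v 1)
      ∈ modePolytope G C := by
  set f := modeWeight C + Pi.single u (1 : ℝ) - Pi.single v 1
  have hf : ∀ t, f t = modeWeight C t + (if t = u then 1 else 0) - (if t = v then 1 else 0) := by
    intro t
    simp [f, Pi.single_apply]
  have hsum : ∑ t, f t = ∑ t, modeWeight C t := by
    simp [hf, Finset.sum_sub_distrib, Finset.sum_add_distrib]
  rw [← hsum]
  refine inv_sum_smul_mem_modePolytope (fun t => ?_) ?_ (fun x hx y hxy => ?_)
  · rw [hf]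
    unfold modeWeight
    split_ifs <;> norm_num
  · rw [hsum]
    have : Nonempty V := ⟨u⟩
    exact sum_modeWeight_pos
  · have hy : y ∉ C := fun hy => hInd x hx y hy hxy
    rw [hf, hf]
    unfold modeWeight
    simp only [hx, hy, if_true, if_false]
    split_ifs <;> norm_num

lemma vectorSpan_modePolytope [Nonempty V] (hInd : ∀ x ∈ C, ∀ y ∈ C, ¬ G.Adj x y) :
    vectorSpan ℝ (modePolytope G C) = LinearMap.ker (coordSum ℝ V) := by
  classical
  refine le_antisymm
    (vectorSpan_le_ker_of_subset_preimage _ _ modePolytope_subset_coordSum_preimage) ?_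
  let v₀ := Classical.arbitrary V
  refine (ker_coordSum_le_span_single_sub_single v₀).trans (span_le.2 ?_)
  rintro _ ⟨u, rfl⟩
  have hmem := vsub_mem_vectorSpan ℝ (modeWeight_add_single_sub_single_mem hInd u v₀)
    (modeWeight_add_single_sub_single_mem (G := G) hInd v₀ v₀)
  rw [SetLike.mem_coe]
  convert smul_mem _ (∑ t, modeWeight C t) hmem using 1
  rw [vsub_eq_sub, ← smul_sub, smul_smul, mul_inv_cancel₀ sum_modeWeight_pos.ne', one_smul,
    add_sub_cancel_right, add_sub_assoc, add_sub_cancel_left]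

end ModePolytope

/-- For an independent set `C`, the mode polytope `M(G,C)` is full-dimensional in the
probability simplex: its dimension is `|V| - 1`. -/
theorem modePolytope_full_dim {V : Type*} [Fintype V] [Nonempty V]
    (G : SimpleGraph V) (C : Set V)
    (hInd : ∀ x ∈ C, ∀ y ∈ C, ¬ G.Adj x y) :
    Module.finrank ℝ (affineSpan ℝ (modePolytope G C)).direction
      = Fintype.card V - 1 := by
  rw [direction_affineSpan, vectorSpan_modePolytope hInd, finrank_ker_coordSum]
end

section
/- Let C ⊆ V be independent in G and x ∈ C. The inequality p_x ≥ 0 defines a facet of M(G,C) if and only if x is an isolated vertex of G. -/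
open scoped Classical

/-- The affine dimension of a subset of `V → ℝ`, with `dim ∅ = -1`. -/
noncomputable def affDim {V : Type*} (s : Set (V → ℝ)) : ℤ :=
  if s = ∅ then -1 else (Module.finrank ℝ (affineSpan ℝ s).direction : ℤ)

/-!
The face `p x = 0` lies in the plane `{p | p x = 0, ∑ v, p v = 1}`, of dimension `|V| - 2`.
If `x` has a neighbour `y`, then `p y ≤ p x = 0` pins the coordinate `y` on the face too, so the
face is empty or of smaller dimension. If `x` is isolated, the normalisation of the weights
`0` at `x`, `2` on `C \ {x}` and `1` elsewhere satisfies every remaining inequality with slack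
(an edge `c ~ y` with `c ∈ C` has `c ≠ x` and, by independence, `y ∉ C`), so a ball of the plane
around it lies in the face.
-/

lemma affDim_of_nonempty {V : Type*} {s : Set (V → ℝ)} (hs : s.Nonempty) :
    affDim s = Module.finrank ℝ (vectorSpan ℝ s) := by
  rw [affDim, if_neg hs.ne_empty, direction_affineSpan]

lemma vectorSpan_le_ker_of_forall_eq {k E F : Type*} [Ring k] [AddCommGroup E] [Module k E]
    [AddCommGroup F] [Module k F] (f : E →ₗ[k] F) {s : Set E} {c : F}
    (hs : ∀ p ∈ s, f p = c) : vectorSpan k s ≤ LinearMap.ker f := by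
  rw [vectorSpan_def, Submodule.span_le]
  rintro _ ⟨a, ha, b, hb, rfl⟩
  simp [vsub_eq_sub, hs a ha, hs b hb]

lemma le_vectorSpan_of_add_mem {E : Type*} [NormedAddCommGroup E] [NormedSpace ℝ E]
    (K : Submodule ℝ E) {s : Set E} {q : E} (hq : q ∈ s) {r : ℝ} (hr : 0 < r)
    (h : ∀ e ∈ K, ‖e‖ ≤ r → q + e ∈ s) : K ≤ vectorSpan ℝ s := by
  intro d hd
  set ε : ℝ := r / (‖d‖ + 1)
  have hε : 0 < ε := by positivity
  have hεd : ‖ε • d‖ ≤ r := by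
    rw [norm_smul, Real.norm_of_nonneg hε.le, div_mul_eq_mul_div, div_le_iff₀ (by positivity)]
    nlinarith [norm_nonneg d]
  have hmem : ε • d ∈ vectorSpan ℝ s := by
    simpa using vsub_mem_vectorSpan ℝ (h _ (K.smul_mem ε hd) hεd) hq
  simpa [smul_smul, inv_mul_cancel₀ hε.ne'] using (vectorSpan ℝ s).smul_mem ε⁻¹ hmem

section

variable {V : Type*} [Fintype V]

noncomputable def evalSum (x : V) : (V → ℝ) →ₗ[ℝ] ℝ × ℝ :=
  (LinearMap.proj x).prod (∑ v, LinearMap.proj v)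

@[simp]
lemma evalSum_apply (x : V) (d : V → ℝ) : evalSum x d = (d x, ∑ v, d v) := by
  simp [evalSum]

lemma mem_ker_evalSum {x : V} {d : V → ℝ} :
    d ∈ LinearMap.ker (evalSum x) ↔ d x = 0 ∧ ∑ v, d v = 0 := by
  simp

lemma evalSum_surjective {x z : V} (hz : z ≠ x) : Function.Surjective (evalSum x) := by
  rintro ⟨a, c⟩
  refine ⟨Pi.single x a + Pi.single z (c - a), ?_⟩
  simp [Pi.single_eq_of_ne hz.symm, Finset.sum_add_distrib]

lemma finrank_ker_evalSum_add_two {x z : V} (hz : z ≠ x) :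
    Module.finrank ℝ (LinearMap.ker (evalSum x)) + 2 = Fintype.card V := by
  have h := LinearMap.finrank_range_add_finrank_ker (evalSum x)
  rw [LinearMap.range_eq_top.mpr (evalSum_surjective hz), finrank_top,
    Module.finrank_fintype_fun_eq_card, Module.finrank_prod, Module.finrank_self] at h
  omega

variable {G : SimpleGraph V} {C : Set V} {x : V}

variable (G C x) in
def positivityFace : Set (V → ℝ) := {p | p ∈ modePolytope G C ∧ p x = 0}

lemma vectorSpan_positivityFace_le :
    vectorSpan ℝ (positivityFace G C x) ≤ LinearMap.ker (evalSum x) :=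
  vectorSpan_le_ker_of_forall_eq (c := (0, 1)) _ fun _ ⟨⟨_, hsum, _⟩, hx⟩ => by simp [hx, hsum]

lemma vectorSpan_positivityFace_lt {y : V} (hx : x ∈ C) (hxy : G.Adj x y)
    (hne : (positivityFace G C x).Nonempty) :
    vectorSpan ℝ (positivityFace G C x) < LinearMap.ker (evalSum x) := by
  have hy : ∀ p ∈ positivityFace G C x, p y = 0 := fun p ⟨⟨hpos, _, hmode⟩, hpx⟩ =>
    le_antisymm (hpx ▸ hmode x hx y hxy) (hpos y)
  obtain ⟨p, hp⟩ := hne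
  obtain ⟨z, -, hpz⟩ := Finset.exists_ne_zero_of_sum_ne_zero (hp.1.2.1.symm ▸ one_ne_zero)
  have hzx : z ≠ x := fun h => hpz (h ▸ hp.2)
  have hzy : z ≠ y := fun h => hpz (h ▸ hy p hp)
  have hyx : y ≠ x := hxy.ne.symm
  -- `e_y - e_z` is in the kernel but moves the coordinate `y`, which is constant on the face.
  refine lt_of_le_of_ne vectorSpan_positivityFace_le fun h => ?_
  have hd : Pi.single y 1 - Pi.single z 1 ∈ vectorSpan ℝ (positivityFace G C x) := by
    rw [h, mem_ker_evalSum]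
    simp [Pi.single_apply, hyx.symm, hzx.symm, Finset.sum_sub_distrib]
  have h0 := vectorSpan_le_ker_of_forall_eq (c := 0) (LinearMap.proj y) hy hd
  simp [Pi.single_eq_of_ne hzy.symm] at h0

lemma exists_slack_point (hInd : ∀ c ∈ C, ∀ y ∈ C, ¬ G.Adj c y) (hiso : ∀ y, ¬ G.Adj x y)
    {z : V} (hz : z ≠ x) :
    ∃ q : V → ℝ, ∃ δ > 0, q x = 0 ∧ ∑ v, q v = 1 ∧ (∀ v ≠ x, δ ≤ q v) ∧
      ∀ c ∈ C, ∀ y, G.Adj c y → q y + δ ≤ q c := by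
  set w : V → ℝ := fun v => if v = x then 0 else if v ∈ C then 2 else 1
  have hw_nonneg : ∀ v, 0 ≤ w v := fun v => by simp only [w]; split_ifs <;> norm_num
  have hw_pos : ∀ v ≠ x, 1 ≤ w v := fun v hv => by
    simp only [w, if_neg hv]; split_ifs <;> norm_num
  have hw_mode : ∀ c ∈ C, ∀ y, G.Adj c y → w y + 1 ≤ w c := by
    intro c hc y hcy
    have hcx : c ≠ x := by rintro rfl; exact hiso y hcy
    have hy : y ∉ C := fun hy => hInd c hc y hy hcy
    simp only [w, if_neg hcx, if_pos hc, if_neg hy]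
    split_ifs <;> norm_num
  have hS : 0 < ∑ v, w v :=
    Finset.sum_pos' (fun v _ => hw_nonneg v) ⟨z, Finset.mem_univ z, by linarith [hw_pos z hz]⟩
  refine ⟨(∑ v, w v)⁻¹ • w, (∑ v, w v)⁻¹, inv_pos.mpr hS, by simp [w], ?_, ?_, ?_⟩
  · simp [← Finset.mul_sum, inv_mul_cancel₀ hS.ne']
  · intro v hv
    simpa using mul_le_mul_of_nonneg_left (hw_pos v hv) (inv_pos.mpr hS).le
  · intro c hc y hcy
    simpa [mul_add] using mul_le_mul_of_nonneg_left (hw_mode c hc y hcy) (inv_pos.mpr hS).le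

lemma add_mem_positivityFace {q e : V → ℝ} {δ : ℝ} (hqx : q x = 0) (hq : ∑ v, q v = 1)
    (hq_pos : ∀ v ≠ x, δ ≤ q v) (hq_mode : ∀ c ∈ C, ∀ y, G.Adj c y → q y + δ ≤ q c)
    (he : e ∈ LinearMap.ker (evalSum x)) (he_small : ‖e‖ ≤ δ / 2) :
    q + e ∈ positivityFace G C x := by
  rw [mem_ker_evalSum] at he
  have hbound : ∀ v, |e v| ≤ δ / 2 := fun v => (norm_le_pi_norm e v).trans he_small
  refine ⟨⟨fun v => ?_, ?_, fun c _ y hcy => ?_⟩, by simp [hqx, he.1]⟩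
  · by_cases hv : v = x
    · simp [hv, hqx, he.1]
    · have := hq_pos v hv
      have := (abs_le.mp (hbound v)).1
      simp only [Pi.add_apply]; linarith [norm_nonneg e]
  · simp [Finset.sum_add_distrib, hq, he.2]
  · have := hq_mode c ‹_› y hcy
    have := (abs_le.mp (hbound y)).2
    have := (abs_le.mp (hbound c)).1
    simp only [Pi.add_apply]; linarith

lemma exists_relInterior_point_positivityFace (hInd : ∀ c ∈ C, ∀ y ∈ C, ¬ G.Adj c y)
    (hiso : ∀ y, ¬ G.Adj x y) {z : V} (hz : z ≠ x) :
    ∃ q ∈ positivityFace G C x, ∃ r > 0, ∀ e ∈ LinearMap.ker (evalSum x),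
      ‖e‖ ≤ r → q + e ∈ positivityFace G C x := by
  obtain ⟨q, δ, hδ, hqx, hq, hq_pos, hq_mode⟩ := exists_slack_point hInd hiso hz
  have h : ∀ e ∈ LinearMap.ker (evalSum x), ‖e‖ ≤ δ / 2 → q + e ∈ positivityFace G C x :=
    fun _ he he_small => add_mem_positivityFace hqx hq hq_pos hq_mode he he_small
  exact ⟨q, by simpa using h 0 (Submodule.zero_mem _) (by simpa using (half_pos hδ).le),
    δ / 2, half_pos hδ, h⟩

lemma positivityFace_eq_empty_of_subsingleton [Subsingleton V] :
    positivityFace G C x = ∅ :=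
  Set.eq_empty_of_forall_notMem fun p ⟨⟨_, hsum, _⟩, hpx⟩ => by
    rw [Fintype.sum_subsingleton _ x, hpx] at hsum
    exact zero_ne_one hsum

end

/-- For an independent `C` and `x ∈ C`, the inequality `p x ≥ 0` defines a facet of
the mode polytope (i.e. the corresponding face has dimension `|V| - 2`) if and only
if `x` is an isolated vertex of `G`. -/
theorem positivity_facet_iff_isolated {V : Type*} [Fintype V]
    (G : SimpleGraph V) (C : Set V)
    (hInd : ∀ x ∈ C, ∀ y ∈ C, ¬ G.Adj x y) (x : V) (hx : x ∈ C) :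
    affDim {p | p ∈ modePolytope G C ∧ p x = 0} = (Fintype.card V : ℤ) - 2 ↔
      ∀ y, ¬ G.Adj x y := by
  change affDim (positivityFace G C x) = _ ↔ _
  constructor
  · intro hdim y hxy
    have hcard := finrank_ker_evalSum_add_two hxy.ne.symm
    rcases (positivityFace G C x).eq_empty_or_nonempty with hF | hF
    · rw [affDim, if_pos hF] at hdim
      omega
    · have hlt := Submodule.finrank_lt_finrank_of_lt (vectorSpan_positivityFace_lt hx hxy hF)
      rw [affDim_of_nonempty hF] at hdim
      omega
  · intro hiso
    by_cases hV : ∃ z, z ≠ x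
    · obtain ⟨z, hz⟩ := hV
      obtain ⟨q, hq, r, hr, hball⟩ := exists_relInterior_point_positivityFace hInd hiso hz
      have hspan : vectorSpan ℝ (positivityFace G C x) = LinearMap.ker (evalSum x) :=
        le_antisymm vectorSpan_positivityFace_le (le_vectorSpan_of_add_mem _ hq hr hball)
      have hcard := finrank_ker_evalSum_add_two hz
      rw [affDim_of_nonempty ⟨q, hq⟩, hspan]
      omega
    · push Not at hV
      have : Subsingleton V := ⟨fun a b => (hV a).trans (hV b).symm⟩
      rw [affDim, if_pos positivityFace_eq_empty_of_subsingleton,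
        Fintype.card_eq_one_iff.mpr ⟨x, hV⟩]
      norm_num
end

section
/- Let C ⊆ V be independent in G. For every x ∈ C and y ∼ x, the mode inequality p_x ≥ p_y defines a facet of M(G,C). -/
open scoped Classical

lemma uniform_mem {V : Type*} [Fintype V] (G : SimpleGraph V) (C : Set V)
    (x y : V) (hne : Nonempty V) :
    (fun _ => ((Fintype.card V : ℝ))⁻¹) ∈ {p | p ∈ modePolytope G C ∧ p x = p y} := by
  have hn : (0:ℝ) < Fintype.card V := by exact_mod_cast Fintype.card_pos
  refine ⟨⟨fun v => by positivity, ?_, fun c hc b hb => le_refl _⟩, rfl⟩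
  simp [Finset.sum_const, mul_inv_cancel₀ (ne_of_gt hn)]

lemma mem_direction_of_cone {V : Type*} [Fintype V] (G : SimpleGraph V) (C : Set V)
    (x : V) (y : V)
    (d : V → ℝ) (hsum : ∑ v, d v = 0) (hdxy : d x = d y)
    (hcone : ∀ c ∈ C, ∀ b, G.Adj c b → d b ≤ d c) :
    d ∈ (affineSpan ℝ {p | p ∈ modePolytope G C ∧ p x = p y}).direction := by
  have hne : Nonempty V := ⟨x⟩
  have hn : (0:ℝ) < Fintype.card V := by exact_mod_cast Fintype.card_pos
  set p0 : V → ℝ := fun _ => ((Fintype.card V : ℝ))⁻¹ with hp0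
  have hp0mem := uniform_mem G C x y hne
  set B : ℝ := 1 + ∑ v, |d v| with hBdef
  have hB : 0 < B := by positivity
  set ε : ℝ := ((Fintype.card V : ℝ) * B)⁻¹ with hεdef
  have hε : 0 < ε := by positivity
  have habs : ∀ v, |d v| ≤ B := by
    intro v
    have h1 : |d v| ≤ ∑ w, |d w| :=
      Finset.single_le_sum (f := fun w => |d w|) (fun w _ => abs_nonneg _) (Finset.mem_univ v)
    linarith
  have hεB : ε * B = ((Fintype.card V : ℝ))⁻¹ := by
    rw [hεdef]; field_simp
  have hmem : (p0 + ε • d) ∈ {p | p ∈ modePolytope G C ∧ p x = p y} := by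
    refine ⟨⟨fun v => ?_, ?_, fun c hc b hadj => ?_⟩, ?_⟩
    · have h2 : -B ≤ d v := (abs_le.mp (habs v)).1
      have h3 : -(ε * B) ≤ ε * d v := by nlinarith [hε.le]
      have : (p0 + ε • d) v = ((Fintype.card V : ℝ))⁻¹ + ε * d v := rfl
      rw [this, ← hεB]; linarith
    · have : ∑ v, (p0 + ε • d) v = (∑ v, p0 v) + ε * ∑ v, d v := by
        simp [Finset.sum_add_distrib, Finset.mul_sum]
      rw [this, hsum]
      have : ∑ v, p0 v = 1 := hp0mem.1.2.1
      rw [this]; ring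
    · have h1 : d b ≤ d c := hcone c hc b hadj
      have : ε * d b ≤ ε * d c := by nlinarith [hε.le]
      show p0 b + ε * d b ≤ p0 c + ε * d c
      simp only [hp0]; linarith
    · show p0 x + ε * d x = p0 y + ε * d y
      simp only [hp0, hdxy]
  have hvs := AffineSubspace.vsub_mem_direction
      (subset_affineSpan ℝ _ hmem) (subset_affineSpan ℝ _ hp0mem)
  have h2 : ε • d ∈ (affineSpan ℝ {p | p ∈ modePolytope G C ∧ p x = p y}).direction := by
    have : (p0 + ε • d) -ᵥ p0 = ε • d := by
      simp [vsub_eq_sub]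
    rwa [this] at hvs
  have h3 := Submodule.smul_mem _ ε⁻¹ h2
  rwa [smul_smul, inv_mul_cancel₀ (ne_of_gt hε), one_smul] at h3

lemma const_mem_direction {V : Type*} [Fintype V] (G : SimpleGraph V) (C : Set V)
    (hInd : ∀ x ∈ C, ∀ y ∈ C, ¬ G.Adj x y) (x : V) (hx : x ∈ C) (y : V) (hxy : G.Adj x y)
    (r : V → ℝ) (hsum : ∑ v, r v = 0)
    (hconst : ∀ v, v ∈ C ∨ v = y → r v = r x) :
    r ∈ (affineSpan ℝ {p | p ∈ modePolytope G C ∧ p x = p y}).direction := by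
  set P : V → Prop := fun v => v ∈ C ∨ v = y with hP
  set S : Finset V := Finset.univ.filter P with hS
  set mm : ℝ := (S.card : ℝ) with hmm
  set kk : ℝ := ((Finset.univ.filter (fun v => ¬ P v)).card : ℝ) with hkk
  have hxS : x ∈ S := by simp [hS, hP, hx]
  have hmm1 : (1:ℝ) ≤ mm := by
    rw [hmm]
    exact_mod_cast Finset.card_pos.mpr ⟨x, hxS⟩
  have hkk0 : (0:ℝ) ≤ kk := by positivity
  set g : V → ℝ := fun v => if P v then kk else -mm with hg
  have hgsum : ∑ v, g v = 0 := by
    rw [hg]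
    rw [Finset.sum_ite]
    simp only [Finset.sum_const, nsmul_eq_mul]
    rw [← hS, ← hmm, ← hkk]
    ring
  have hgxy : g x = g y := by
    have : P x := Or.inl hx
    have hy : P y := Or.inr rfl
    simp [hg, this, hy]
  have hgcone : ∀ c ∈ C, ∀ b, G.Adj c b → g b ≤ g c := by
    intro c hc b hadj
    have hgc : g c = kk := by simp [hg, hP, hc]
    rw [hgc]
    by_cases hb : P b
    · simp [hg, hb]
    · simp only [hg, hb, if_false]
      linarith
  set M : ℝ := 2 * ∑ v, |r v| with hM
  have hM0 : (0:ℝ) ≤ M := by positivity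
  have hMg : M • g ∈ (affineSpan ℝ {p | p ∈ modePolytope G C ∧ p x = p y}).direction := by
    apply mem_direction_of_cone G C x y
    · show ∑ v, M * g v = 0
      rw [← Finset.mul_sum, hgsum]; ring
    · show M * g x = M * g y; rw [hgxy]
    · intro c hc b hadj
      have := hgcone c hc b hadj
      show M * g b ≤ M * g c
      nlinarith
  have habs2 : ∀ b, b ≠ x → |r b| + |r x| ≤ ∑ v, |r v| := by
    intro b hb
    have hsub : ({b, x} : Finset V) ⊆ Finset.univ := Finset.subset_univ _
    have := Finset.sum_le_sum_of_subset_of_nonneg hsub (fun v _ _ => abs_nonneg (r v))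
    rwa [Finset.sum_pair hb] at this
  have hrMg : r + M • g ∈ (affineSpan ℝ {p | p ∈ modePolytope G C ∧ p x = p y}).direction := by
    apply mem_direction_of_cone G C x y
    · have : ∑ v, (r v + M * g v) = (∑ v, r v) + M * ∑ v, g v := by
        rw [Finset.sum_add_distrib, Finset.mul_sum]
      show ∑ v, (r v + M * g v) = 0
      rw [this, hsum, hgsum]; ring
    · show r x + M * g x = r y + M * g y
      rw [hgxy, hconst y (Or.inr rfl)]
    · intro c hc b hadj
      show r b + M * g b ≤ r c + M * g c
      have hrc : r c = r x := hconst c (Or.inl hc)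
      have hgc : g c = kk := by simp [hg, hP, hc]
      have hbC : b ∉ C := fun hbC => hInd c hc b hbC hadj
      by_cases hby : b = y
      · subst hby
        rw [hrc, hconst b (Or.inr rfl), hgc]
        have : g b = kk := by simp [hg, hP]
        rw [this]
      · have hPb : ¬ P b := by
          simp only [hP]
          push_neg
          exact ⟨hbC, hby⟩
        have hgb : g b = -mm := by simp only [hg, hPb, if_false]
        rw [hgb, hgc, hrc]
        have hbx : b ≠ x := fun h => hbC (h ▸ hx)
        have h1 := habs2 b hbx
        have h2 : r b - M ≤ r x := by
          have : |r b| + |r x| ≤ M / 2 * 2 / 2 * 2 := by rw [hM] at *; linarith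
          have hb1 : r b ≤ |r b| := le_abs_self _
          have hx1 : -|r x| ≤ r x := neg_abs_le _
          rw [hM] at *
          linarith
        nlinarith
  have : r = (r + M • g) - M • g := by ring
  rw [this]
  exact Submodule.sub_mem _ hrMg hMg

lemma W_le_direction {V : Type*} [Fintype V] (G : SimpleGraph V) (C : Set V)
    (hInd : ∀ x ∈ C, ∀ y ∈ C, ¬ G.Adj x y) (x : V) (hx : x ∈ C) (y : V) (hxy : G.Adj x y)
    (d : V → ℝ) (hsum : ∑ v, d v = 0) (hdxy : d x = d y) :
    d ∈ (affineSpan ℝ {p | p ∈ modePolytope G C ∧ p x = p y}).direction := by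
  have hyC : y ∉ C := fun hyC => hInd x hx y hyC hxy
  have hne : Nonempty V := ⟨x⟩
  have hn : (0:ℝ) < Fintype.card V := by exact_mod_cast Fintype.card_pos
  set n : ℝ := (Fintype.card V : ℝ) with hndef
  set E : Finset V := (Finset.univ.filter (· ∈ C)).erase x with hE
  have hxE : x ∉ E := Finset.notMem_erase _ _
  have hyE : y ∉ E := by
    simp [hE, hyC]
  have hEC : ∀ a ∈ E, a ∈ C := by
    intro a ha
    have := Finset.mem_of_mem_erase ha
    simpa using this
  set w : V → V → ℝ := fun a v => (if v = a then (1:ℝ) else 0) - n⁻¹ with hw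
  have hwsum : ∀ a, ∑ v, w a v = 0 := by
    intro a
    rw [hw]
    rw [Finset.sum_sub_distrib, Finset.sum_ite_eq' Finset.univ a (fun _ => (1:ℝ))]
    simp [Finset.sum_const, hndef, mul_inv_cancel₀ (ne_of_gt hn)]
  have hwdir : ∀ a ∈ E, w a ∈ (affineSpan ℝ {p | p ∈ modePolytope G C ∧ p x = p y}).direction := by
    intro a ha
    apply mem_direction_of_cone G C x y _ (hwsum a)
    · have hax : x ≠ a := fun h => hxE (h ▸ ha)
      have hay : y ≠ a := fun h => hyE (h ▸ ha)
      simp [hw, hax, hay]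
    · intro c hc b hadj
      have hba : b ≠ a := fun h => hInd c hc a (hEC a ha) (h ▸ hadj)
      have h1 : w a b = -n⁻¹ := by simp [hw, hba]
      rw [h1, hw]
      have : (0:ℝ) ≤ (if c = a then (1:ℝ) else 0) := by positivity
      simp only []
      linarith
  set T : ℝ := ∑ a ∈ E, (d a - d x) with hT
  set d1 : V → ℝ := ∑ a ∈ E, (d a - d x) • w a with hd1
  have hd1dir : d1 ∈ (affineSpan ℝ {p | p ∈ modePolytope G C ∧ p x = p y}).direction := by
    rw [hd1]
    exact Submodule.sum_mem _ (fun a ha => Submodule.smul_mem _ _ (hwdir a ha))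
  have hd1v : ∀ v, d1 v = (if v ∈ E then d v - d x else 0) - T * n⁻¹ := by
    intro v
    have : d1 v = ∑ a ∈ E, (d a - d x) * ((if v = a then 1 else 0) - n⁻¹) := by
      rw [hd1]
      simp [Finset.sum_apply, hw]
    rw [this]
    simp only [mul_sub]
    rw [Finset.sum_sub_distrib]
    congr 1
    · have h1 : ∀ a ∈ E, (d a - d x) * (if v = a then (1:ℝ) else 0)
          = if a = v then d a - d x else 0 := by
        intro a _
        by_cases h : v = a
        · simp [h]
        · simp [h, Ne.symm h, fun hh : a = v => h hh.symm]
      rw [Finset.sum_congr rfl h1, Finset.sum_ite_eq' E v (fun a => d a - d x)]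
    · rw [← Finset.sum_mul, ← hT]
  set r : V → ℝ := d - d1 with hr
  have hrx : r x = d x + T * n⁻¹ := by
    show d x - d1 x = _
    rw [hd1v x, if_neg hxE]; ring
  have hrconst : ∀ v, v ∈ C ∨ v = y → r v = r x := by
    intro v hv
    rcases hv with hvC | hvy
    · by_cases hvx : v = x
      · rw [hvx]
      · have hvE : v ∈ E := by
          simp [hE, hvC, hvx]
        show d v - d1 v = r x
        rw [hd1v v, if_pos hvE, hrx]; ring
    · subst hvy
      show d v - d1 v = r x
      rw [hd1v v, if_neg hyE, hrx, hdxy]; ring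
  have hrsum : ∑ v, r v = 0 := by
    have h1 : ∑ v, d1 v = ∑ a ∈ E, (d a - d x) * (∑ v, w a v) := by
      simp only [hd1, Finset.sum_apply, Pi.smul_apply, smul_eq_mul, Finset.mul_sum]
      rw [Finset.sum_comm]
    have h2 : ∑ v, d1 v = 0 := by
      rw [h1]
      apply Finset.sum_eq_zero
      intro a _
      rw [hwsum a, mul_zero]
    have h3 : ∑ v, r v = ∑ v, d v - ∑ v, d1 v := by
      rw [← Finset.sum_sub_distrib]
      rfl
    rw [h3, hsum, h2]; ring
  have hrdir := const_mem_direction G C hInd x hx y hxy r hrsum hrconst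
  have : d = d1 + r := by rw [hr]; ring
  rw [this]
  exact Submodule.add_mem _ hd1dir hrdir

noncomputable def Lxy (V : Type*) [Fintype V] (x y : V) : (V → ℝ) →ₗ[ℝ] ℝ × ℝ :=
  LinearMap.prod (∑ v, LinearMap.proj v)
    ((LinearMap.proj x : (V → ℝ) →ₗ[ℝ] ℝ) - LinearMap.proj y)

lemma Lxy_apply {V : Type*} [Fintype V] (x y : V) (p : V → ℝ) :
    Lxy V x y p = (∑ v, p v, p x - p y) := by
  simp [Lxy]

lemma mem_ker_Lxy {V : Type*} [Fintype V] (x y : V) (p : V → ℝ) :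
    p ∈ LinearMap.ker (Lxy V x y) ↔ (∑ v, p v = 0 ∧ p x = p y) := by
  rw [LinearMap.mem_ker, Lxy_apply, Prod.ext_iff]
  simp [sub_eq_zero]

lemma finrank_ker_Lxy {V : Type*} [Fintype V] (x y : V) (hne : x ≠ y) :
    (Module.finrank ℝ (LinearMap.ker (Lxy V x y)) : ℤ) = (Fintype.card V : ℤ) - 2 := by
  have hsurj : Function.Surjective (Lxy V x y) := by
    rintro ⟨a, b⟩
    refine ⟨((a+b)/2) • (Pi.single x 1 : V → ℝ) + ((a-b)/2) • (Pi.single y 1 : V → ℝ), ?_⟩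
    rw [Lxy_apply]
    have h1 : ∑ v, (((a+b)/2) • (Pi.single x 1 : V → ℝ) + ((a-b)/2) • (Pi.single y 1 : V → ℝ)) v = a := by
      simp [Finset.sum_add_distrib, ← Finset.mul_sum, Finset.sum_pi_single']
      ring
    have hx1 : (Pi.single x 1 : V → ℝ) x = 1 := Pi.single_eq_same x 1
    have hx2 : (Pi.single y 1 : V → ℝ) x = 0 := Pi.single_eq_of_ne hne 1
    have hy1 : (Pi.single x 1 : V → ℝ) y = 0 := Pi.single_eq_of_ne hne.symm 1
    have hy2 : (Pi.single y 1 : V → ℝ) y = 1 := Pi.single_eq_same y 1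
    have h2 : (((a+b)/2) • (Pi.single x 1 : V → ℝ) + ((a-b)/2) • (Pi.single y 1 : V → ℝ)) x
        - (((a+b)/2) • (Pi.single x 1 : V → ℝ) + ((a-b)/2) • (Pi.single y 1 : V → ℝ)) y = b := by
      simp only [Pi.add_apply, Pi.smul_apply, smul_eq_mul, hx1, hx2, hy1, hy2]
      ring
    rw [h1, h2]
  have hrange : LinearMap.range (Lxy V x y) = ⊤ := LinearMap.range_eq_top.mpr hsurj
  have hrn := LinearMap.finrank_range_add_finrank_ker (Lxy V x y)
  rw [hrange] at hrn
  have h1 : Module.finrank ℝ (⊤ : Submodule ℝ (ℝ × ℝ)) = 2 := by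
    rw [finrank_top]
    simp [Module.finrank_prod]
  have h2 : Module.finrank ℝ (V → ℝ) = Fintype.card V := Module.finrank_fintype_fun_eq_card ℝ
  rw [h1, h2] at hrn
  have hcard : 2 ≤ Fintype.card V := by
    have : Nontrivial V := ⟨x, y, hne⟩
    exact Fintype.one_lt_card
  omega

/-- For an independent `C`, every mode inequality `p x ≥ p y` with `x ∈ C`, `y ∼ x`
defines a facet of the mode polytope: the face where it is tight has
dimension `|V| - 2`. -/
theorem mode_inequality_facet_of_modePolytope {V : Type*} [Fintype V]
    (G : SimpleGraph V) (C : Set V)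
    (hInd : ∀ x ∈ C, ∀ y ∈ C, ¬ G.Adj x y) (x : V) (hx : x ∈ C)
    (y : V) (hxy : G.Adj x y) :
    affDim {p | p ∈ modePolytope G C ∧ p x = p y} = (Fintype.card V : ℤ) - 2 := by
  have hne : Nonempty V := ⟨x⟩
  have hxyne : x ≠ y := hxy.ne
  set F : Set (V → ℝ) := {p | p ∈ modePolytope G C ∧ p x = p y} with hF
  set p0 : V → ℝ := fun _ => ((Fintype.card V : ℝ))⁻¹ with hp0
  have hp0F : p0 ∈ F := uniform_mem G C x y hne
  have hFne : F ≠ ∅ := Set.nonempty_iff_ne_empty.mp ⟨p0, hp0F⟩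
  have hdir : (affineSpan ℝ F).direction = LinearMap.ker (Lxy V x y) := by
    apply le_antisymm
    · have hle : affineSpan ℝ F ≤ AffineSubspace.mk' p0 (LinearMap.ker (Lxy V x y)) := by
        rw [affineSpan_le]
        intro p hp
        rw [SetLike.mem_coe, AffineSubspace.mem_mk', mem_ker_Lxy]
        have hps : ∑ v, p v = 1 := hp.1.2.1
        have hp0s : ∑ v, p0 v = 1 := hp0F.1.2.1
        constructor
        · have : ∑ v, (p -ᵥ p0) v = ∑ v, p v - ∑ v, p0 v := by
            rw [← Finset.sum_sub_distrib]; rfl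
          rw [this, hps, hp0s]; norm_num
        · show p x - p0 x = p y - p0 y
          rw [hp.2]
      calc (affineSpan ℝ F).direction
          ≤ (AffineSubspace.mk' p0 (LinearMap.ker (Lxy V x y))).direction :=
            AffineSubspace.direction_le hle
        _ = LinearMap.ker (Lxy V x y) := AffineSubspace.direction_mk' _ _
    · intro d hd
      rw [mem_ker_Lxy] at hd
      exact W_le_direction G C hInd x hx y hxy d hd.1 hd.2
  rw [affDim, if_neg hFne, hdir]
  exact finrank_ker_Lxy x y hxyne
end

section
/- Let C ⊆ V be independent in G, N = |V|, and let Σ(G,C) be the set of bijections σ : {1,…,N} → V such that σ⁻¹(x) < σ⁻¹(y) whenever y ∈ C and x ∼ y. For a bijection σ, let Δ_σ = {p ∈ Δ(V) : p_{σ(1)} ≤ p_{σ(2)} ≤ … ≤ p_{σ(N)}}. Then M(G,C) = ⋃_{σ ∈ Σ(G,C)} Δ_σ. -/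
/-- The simplex of probability distributions that are monotone along the
ordering `σ` of `V`. -/
def orderSimplex {V : Type*} [Fintype V] (σ : Fin (Fintype.card V) ≃ V) :
    Set (V → ℝ) :=
  {p | (∀ v, 0 ≤ p v) ∧ (∑ v, p v = 1) ∧
    ∀ i j : Fin (Fintype.card V), i ≤ j → p (σ i) ≤ p (σ j)}

theorem exists_equivFin_monotone_comp {V α : Type*} [Fintype V] [LinearOrder α] (f : V → α) :
    ∃ σ : Fin (Fintype.card V) ≃ V, Monotone (f ∘ σ) :=
  ⟨(Tuple.sort (f ∘ (Fintype.equivFin V).symm)).trans (Fintype.equivFin V).symm,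
    Tuple.monotone_sort (f ∘ (Fintype.equivFin V).symm)⟩

theorem Monotone.equiv_symm_lt_symm {ι V α : Type*} [LinearOrder ι] [Preorder α]
    {f : V → α} {σ : ι ≃ V} (h : Monotone (f ∘ σ)) {x y : V} (hxy : f x < f y) :
    σ.symm x < σ.symm y :=
  h.reflect_lt (by simpa using hxy)

theorem orderSimplex_subset_modePolytope {V : Type*} [Fintype V] (G : SimpleGraph V)
    (C : Set V) {σ : Fin (Fintype.card V) ≃ V}
    (hσ : ∀ x y, y ∈ C → G.Adj x y → σ.symm x < σ.symm y) :
    orderSimplex σ ⊆ modePolytope G C := by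
  rintro p ⟨hpos, hsum, hmono⟩
  refine ⟨hpos, hsum, fun y hy x hxy => ?_⟩
  simpa using hmono _ _ (hσ x y hy hxy.symm).le

theorem toLex_lt_of_mem_modePolytope {V : Type*} [Fintype V] {G : SimpleGraph V} {C : Set V}
    [DecidablePred (· ∈ C)] (hInd : ∀ x ∈ C, ∀ y ∈ C, ¬ G.Adj x y) {p : V → ℝ}
    (hp : p ∈ modePolytope G C) {x y : V} (hy : y ∈ C) (hxy : G.Adj x y) :
    toLex (p x, decide (x ∈ C)) < toLex (p y, decide (y ∈ C)) := by
  rw [Prod.Lex.toLex_lt_toLex]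
  rcases (hp.2.2 y hy x hxy.symm).lt_or_eq with hlt | heq
  · exact Or.inl hlt
  · have hx : x ∉ C := fun hx => hInd x hx y hy hxy
    exact Or.inr ⟨heq, by simp [hx, hy]⟩

/-- For an independent `C`, the mode polytope is the union of the simplices
`Δ_σ` over all orderings `σ` of `V` such that `σ⁻¹ x < σ⁻¹ y` whenever `y ∈ C`
and `x ∼ y`. -/
theorem modePolytope_eq_union_orderSimplices {V : Type*} [Fintype V]
    (G : SimpleGraph V) (C : Set V)
    (hInd : ∀ x ∈ C, ∀ y ∈ C, ¬ G.Adj x y) :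
    modePolytope G C =
      ⋃ σ ∈ {σ : Fin (Fintype.card V) ≃ V |
          ∀ x y, y ∈ C → G.Adj x y → σ.symm x < σ.symm y},
        orderSimplex σ := by
  classical
  refine Set.Subset.antisymm (fun p hp => ?_)
    (Set.iUnion₂_subset fun σ hσ => orderSimplex_subset_modePolytope G C hσ)
  obtain ⟨σ, hσ⟩ := exists_equivFin_monotone_comp fun v => toLex (p v, decide (v ∈ C))
  refine Set.mem_iUnion₂.2 ⟨σ, fun x y hy hxy => ?_, hp.1, hp.2.1, fun i j hij => ?_⟩
  · exact hσ.equiv_symm_lt_symm (toLex_lt_of_mem_modePolytope hInd hp hy hxy)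
  · exact Prod.Lex.monotone_fst _ _ (hσ hij)
end

section
/- Let C ⊆ V be independent in G. The family of vectors {f_C^x : x ∈ V}, where f_C^x is the uniform distribution on {x} ∪ {y ∈ C : y ∼ x}, is linearly independent in R^V. -/
/-- For an independent `C`, the family of uniform distributions `f_C^x` on
`{x} ∪ N_C(x)`, `x ∈ V`, is linearly independent in `ℝ^V`. -/
theorem strong_mode_vertices_linearIndependent {V : Type*} [Fintype V]
    [DecidableEq V] (G : SimpleGraph V) [DecidableRel G.Adj] (C : Finset V)
    (hInd : ∀ x ∈ C, ∀ y ∈ C, ¬ G.Adj x y) :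
    LinearIndependent ℝ
      (fun x : V => uniformOn (insert x (C.filter fun y => G.Adj y x))) := by
  rw [Fintype.linearIndependent_iff]
  intro g hg
  have key : ∀ v, ∑ x, g x * uniformOn (insert x (C.filter fun y => G.Adj y x)) v = 0 := by
    intro v
    have := congrFun hg v
    simpa [Finset.sum_apply] using this
  have diag : ∀ v : V, uniformOn (insert v (C.filter fun y => G.Adj y v)) v ≠ 0 := by
    intro v
    have hmem : v ∈ insert v (C.filter fun y => G.Adj y v) := Finset.mem_insert_self _ _
    have hpos : (0:ℝ) < ((insert v (C.filter fun y => G.Adj y v)).card : ℝ) := by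
      exact_mod_cast Finset.card_pos.mpr ⟨v, hmem⟩
    simp only [uniformOn, if_pos hmem]
    exact inv_ne_zero (ne_of_gt hpos)
  have h1 : ∀ v, v ∉ C → g v = 0 := by
    intro v hv
    have hsum := key v
    rw [Finset.sum_eq_single v] at hsum
    · exact (mul_eq_zero.mp hsum).resolve_right (diag v)
    · intro x _ hx
      have : v ∉ insert x (C.filter fun y => G.Adj y x) := by
        simp only [Finset.mem_insert, Finset.mem_filter]
        rintro (rfl | ⟨hvC, _⟩)
        · exact hx rfl
        · exact hv hvC
      simp [uniformOn, this]
    · simp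
  intro v
  by_cases hv : v ∈ C
  · have hsum := key v
    rw [Finset.sum_eq_single v] at hsum
    · exact (mul_eq_zero.mp hsum).resolve_right (diag v)
    · intro x _ hx
      by_cases hxC : x ∈ C
      · have : v ∉ insert x (C.filter fun y => G.Adj y x) := by
          simp only [Finset.mem_insert, Finset.mem_filter]
          rintro (rfl | ⟨hvC, hadj⟩)
          · exact hx rfl
          · exact hInd v hv x hxC hadj
        simp [uniformOn, this]
      · rw [h1 x hxC, zero_mul]
    · simp
  · exact h1 v hv
end
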